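/- For every integer p and every natural number q ≥ 1, det A(p,q) = b(p, q−1, q−1) + c(p, q−1, q−1). -/
import Mathlib


/-- Entry function for the matrix `A(p,q)` from the paper. -/
def Aent (p : ℤ) (q : ℕ) (i j : ℕ) : ℤ :=
  if i = j ∧ i ≤ 2 then 1 - 2 * p
  else if i ≤ 2 ∧ j ≤ 2 then p
  else if 3 ≤ i ∧ i = j then 2
  else if 3 ≤ min i j ∧ max i j ≤ q + 1 ∧ max i j = min i j + 1 then -1
  else if q + 2 ≤ min i j ∧ max i j ≤ 2 * q ∧ max i j = min i j + 1 then -1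
  else if 2 ≤ q ∧ ((i = 1 ∧ j = 3) ∨ (i = 3 ∧ j = 1)) then -1
  else if 2 ≤ q ∧ ((i = 2 ∧ j = q + 2) ∨ (i = q + 2 ∧ j = 2)) then -1
  else 0

/-- The matrix `A(p,q)`: a symmetric `(2q+1) × (2q+1)` integer matrix. -/
def Amat (p : ℤ) (q : ℕ) : Matrix (Fin (2 * q + 1)) (Fin (2 * q + 1)) ℤ :=
  fun i j => Aent p q i.val j.val

/-- Entry function for the matrix `B(p,q,r)` from the paper. -/
def Bent (p : ℤ) (q r : ℕ) (i j : ℕ) : ℤ :=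
  if i = 0 ∧ j = 0 then -2 * p
  else if i = j ∧ (i = 1 ∨ i = 2) then 1 - 2 * p
  else if i ≤ 2 ∧ j ≤ 2 then p
  else if 3 ≤ i ∧ i = j then 2
  else if 3 ≤ min i j ∧ max i j ≤ 2 + q ∧ max i j = min i j + 1 then -1
  else if 3 + q ≤ min i j ∧ max i j ≤ 2 + q + r ∧ max i j = min i j + 1 then -1
  else if 1 ≤ q ∧ ((i = 2 ∧ j = 3) ∨ (i = 3 ∧ j = 2)) then -1
  else if 1 ≤ r ∧ ((i = 1 ∧ j = 3 + q) ∨ (i = 3 + q ∧ j = 1)) then -1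
  else 0

/-- The matrix `B(p,q,r)`: a symmetric `(3+q+r) × (3+q+r)` integer matrix. -/
def Bmat (p : ℤ) (q r : ℕ) : Matrix (Fin (3 + q + r)) (Fin (3 + q + r)) ℤ :=
  fun i j => Bent p q r i.val j.val

/-- `b(p,q,r) = det B(p,q,r)`. -/
def bdet (p : ℤ) (q r : ℕ) : ℤ := (Bmat p q r).det

/-- Entry function for the matrix `C(p,q,r)` from the paper. -/
def Cent (p : ℤ) (q r : ℕ) (i j : ℕ) : ℤ :=
  if i = j ∧ i ≤ 1 then 1 - 2 * p
  else if i ≤ 1 ∧ j ≤ 1 then p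
  else if 2 ≤ i ∧ i = j then 2
  else if 2 ≤ min i j ∧ max i j ≤ 1 + q ∧ max i j = min i j + 1 then -1
  else if 2 + q ≤ min i j ∧ max i j ≤ 1 + q + r ∧ max i j = min i j + 1 then -1
  else if 1 ≤ q ∧ ((i = 1 ∧ j = 2) ∨ (i = 2 ∧ j = 1)) then -1
  else if 1 ≤ r ∧ ((i = 0 ∧ j = 2 + q) ∨ (i = 2 + q ∧ j = 0)) then -1
  else 0

/-- The matrix `C(p,q,r)`: a symmetric `(2+q+r) × (2+q+r)` integer matrix. -/
def Cmat (p : ℤ) (q r : ℕ) : Matrix (Fin (2 + q + r)) (Fin (2 + q + r)) ℤ :=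
  fun i j => Cent p q r i.val j.val

/-- `c(p,q,r) = det C(p,q,r)`. -/
def cdet (p : ℤ) (q r : ℕ) : ℤ := (Cmat p q r).det

/- auxiliary -/
def sswap (x : ℕ) : ℕ := if x = 1 then 2 else if x = 2 then 1 else x
def tswap (x : ℕ) : ℕ := if x = 0 then 1 else if x = 1 then 0 else x
def Srel (a i : ℕ) : Prop := (a = 0 ∧ i = 0) ∨ (a = 2 ∧ i = 1) ∨ (a = 1 ∧ i = 2) ∨ (3 ≤ a ∧ a = i)
def Trel (a i : ℕ) : Prop := (a = 1 ∧ i = 0) ∨ (a = 0 ∧ i = 1) ∨ (2 ≤ a ∧ a = i)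

lemma srel_sswap (x : ℕ) : Srel (sswap x) x := by unfold Srel sswap; split_ifs <;> first | contradiction | omega
lemma trel_tswap (x : ℕ) : Trel (tswap x) x := by unfold Trel tswap; split_ifs <;> first | contradiction | omega
lemma sswap_lt {n x : ℕ} (h3 : 3 ≤ n) (hx : x < n) : sswap x < n := by
  unfold sswap; split_ifs <;> first | contradiction | omega
lemma tswap_lt {n x : ℕ} (h2 : 2 ≤ n) (hx : x < n) : tswap x < n := by
  unfold tswap; split_ifs <;> first | contradiction | omega
lemma sswap_invol (x : ℕ) : sswap (sswap x) = x := by unfold sswap; split_ifs <;> first | contradiction | omega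
lemma tswap_invol (x : ℕ) : tswap (tswap x) = x := by unfold tswap; split_ifs <;> first | contradiction | omega

lemma bcore (p : ℤ) (q : ℕ) (hq : 1 ≤ q) {a b i j : ℕ} (ha : Srel a i) (hb : Srel b j) :
    Bent p (q-1) (q-1) a b = if i = 0 ∧ j = 0 then -2*p else Aent p q i j := by
  unfold Srel at ha hb
  unfold Bent Aent
  exact ite_congr (propext (by omega)) (fun _ => rfl) fun h1 =>
    if_congr (by omega) rfl <|
    if_congr (by clear h1; omega) rfl <|
    if_congr (by clear h1; omega) rfl <|
    if_congr (by clear h1; omega) rfl <|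
    if_congr (by clear h1; omega) rfl <|
    if_congr (by clear h1; omega) rfl <|
    if_congr (by clear h1; omega) rfl rfl

lemma ccore (p : ℤ) (q : ℕ) (hq : 1 ≤ q) {a b i j : ℕ} (ha : Trel a i) (hb : Trel b j) :
    Cent p (q-1) (q-1) a b = Aent p q (i+1) (j+1) := by
  unfold Trel at ha hb
  unfold Cent Aent
  exact if_congr (by omega) rfl <|
    if_congr (by omega) rfl <|
    if_congr (by omega) rfl <|
    if_congr (by omega) rfl <|
    if_congr (by omega) rfl <|
    if_congr (by omega) rfl <|
    if_congr (by omega) rfl rfl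

/-- `B(p,q-1,q-1)` re-indexed to size `2q+1` with indices 1,2 swapped. -/
def MBm (p : ℤ) (q : ℕ) : Matrix (Fin (2*q+1)) (Fin (2*q+1)) ℤ :=
  fun i j => Bent p (q-1) (q-1) (sswap i.val) (sswap j.val)
/-- `C(p,q-1,q-1)` re-indexed to size `2q` with indices 0,1 swapped. -/
def MCm (p : ℤ) (q : ℕ) : Matrix (Fin (2*q)) (Fin (2*q)) ℤ :=
  fun i j => Cent p (q-1) (q-1) (tswap i.val) (tswap j.val)

lemma bdet_eq (p : ℤ) (q : ℕ) (hq : 1 ≤ q) : bdet p (q-1) (q-1) = (MBm p q).det := by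
  have hsz : 3 + (q-1) + (q-1) = 2*q+1 := by omega
  have h3 : 3 ≤ 2*q+1 := by omega
  let σ : Fin (2*q+1) ≃ Fin (2*q+1) :=
    { toFun := fun x => ⟨sswap x.val, sswap_lt h3 x.isLt⟩
      invFun := fun x => ⟨sswap x.val, sswap_lt h3 x.isLt⟩
      left_inv := fun x => Fin.ext (sswap_invol x.val)
      right_inv := fun x => Fin.ext (sswap_invol x.val) }
  have key : Bmat p (q-1) (q-1) =
      (MBm p q).submatrix ((finCongr hsz).trans σ) ((finCongr hsz).trans σ) := by
    ext i j
    show Bent p (q-1) (q-1) i.val j.val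
        = Bent p (q-1) (q-1) (sswap (sswap i.val)) (sswap (sswap j.val))
    rw [sswap_invol, sswap_invol]
  unfold bdet
  rw [key, Matrix.det_submatrix_equiv_self]

lemma cdet_eq (p : ℤ) (q : ℕ) (hq : 1 ≤ q) : cdet p (q-1) (q-1) = (MCm p q).det := by
  have hsz : 2 + (q-1) + (q-1) = 2*q := by omega
  have h2 : 2 ≤ 2*q := by omega
  let σ : Fin (2*q) ≃ Fin (2*q) :=
    { toFun := fun x => ⟨tswap x.val, tswap_lt h2 x.isLt⟩
      invFun := fun x => ⟨tswap x.val, tswap_lt h2 x.isLt⟩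
      left_inv := fun x => Fin.ext (tswap_invol x.val)
      right_inv := fun x => Fin.ext (tswap_invol x.val) }
  have key : Cmat p (q-1) (q-1) =
      (MCm p q).submatrix ((finCongr hsz).trans σ) ((finCongr hsz).trans σ) := by
    ext i j
    show Cent p (q-1) (q-1) i.val j.val
        = Cent p (q-1) (q-1) (tswap (tswap i.val)) (tswap (tswap j.val))
    rw [tswap_invol, tswap_invol]
  unfold cdet
  rw [key, Matrix.det_submatrix_equiv_self]

theorem detA_eq_b_add_c (p : ℤ) (q : ℕ) (hq : 1 ≤ q) :
    (Amat p q).det = bdet p (q - 1) (q - 1) + cdet p (q - 1) (q - 1) := by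
  rw [bdet_eq p q hq, cdet_eq p q hq]
  have hMB : ∀ i j : Fin (2*q+1),
      MBm p q i j = if i.val = 0 ∧ j.val = 0 then -2*p else Aent p q i.val j.val :=
    fun i j => bcore p q hq (srel_sswap _) (srel_sswap _)
  have e1 : (MBm p q).updateRow 0 ((MBm p q) 0 + Pi.single 0 1) = Amat p q := by
    ext i j
    rcases eq_or_ne i 0 with rfl | hi
    · rw [Matrix.updateRow_self]
      rw [Pi.add_apply, hMB 0 j, Pi.single_apply]
      show _ = Aent p q (0:Fin (2*q+1)).val j.val
      rcases eq_or_ne j 0 with rfl | hj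
      · rw [if_pos ⟨rfl, rfl⟩, if_pos rfl]
        show -2*p + 1 = Aent p q 0 0
        unfold Aent
        norm_num
        ring
      · have hj' : j.val ≠ 0 := fun h => hj (Fin.ext (by simpa using h))
        rw [if_neg (by simp [hj']), if_neg hj, add_zero]
    · rw [Matrix.updateRow_ne hi, hMB i j]
      have hi' : i.val ≠ 0 := fun h => hi (Fin.ext (by simpa using h))
      rw [if_neg (by simp [hi'])]
      rfl
  have e3 : ((MBm p q).updateRow 0 (Pi.single 0 1)).det = (MCm p q).det := by
    rw [Matrix.det_succ_row_zero]
    rw [Fintype.sum_eq_single (0 : Fin (2*q+1)) ?_]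
    · rw [Matrix.updateRow_self, Pi.single_eq_same, Fin.succAbove_zero]
      have hsub : ((MBm p q).updateRow 0 (Pi.single 0 1)).submatrix Fin.succ Fin.succ
          = MCm p q := by
        ext i j
        rw [Matrix.submatrix_apply, Matrix.updateRow_ne (Fin.succ_ne_zero i)]
        have h1 : MBm p q i.succ j.succ = Aent p q (i.val+1) (j.val+1) := by
          have := bcore p q hq (srel_sswap (i.val+1)) (srel_sswap (j.val+1))
          rw [show (MBm p q i.succ j.succ : ℤ)
              = Bent p (q-1) (q-1) (sswap (i.val+1)) (sswap (j.val+1)) from rfl, this,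
            if_neg (by omega)]
        have h2 : MCm p q i j = Aent p q (i.val+1) (j.val+1) :=
          ccore p q hq (trel_tswap i.val) (trel_tswap j.val)
        rw [h1, h2]
      rw [hsub]
      simp
    · intro j hj
      rw [Matrix.updateRow_self, Pi.single_eq_of_ne hj]
      ring
  calc (Amat p q).det
      = ((MBm p q).updateRow 0 ((MBm p q) 0 + Pi.single 0 1)).det := by rw [e1]
    _ = ((MBm p q).updateRow 0 ((MBm p q) 0)).det
        + ((MBm p q).updateRow 0 (Pi.single 0 1)).det := Matrix.det_updateRow_add _ _ _ _
    _ = (MBm p q).det + (MCm p q).det := by rw [Matrix.updateRow_eq_self, e3]
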